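/- arXiv:1511.07644 — 2 statements merged into one kernel-verified Lean document; each statement's English description precedes it below -/
import Mathlib

section
/- Let X be a finite set of integers greater than 1 and suppose the bipartite divisor graph B(X) is a cycle of length 4. Then X = {m, n} with m ≠ n, and there exist distinct primes p, q such that the set of primes dividing m equals {p, q} and the set of primes dividing n equals {p, q}. -/
open CategoryTheory

/-- The set of irreducible complex character degrees of a group. -/
def cdSet (G : Type) [Group G] : Set ℕ :=
  {n | ∃ V : FDRep ℂ G, Simple V ∧ Module.finrank ℂ V = n}

/-- Primes dividing some element of `X`. -/
def rhoSet (X : Set ℕ) : Set ℕ := {p | p.Prime ∧ ∃ m ∈ X, p ∣ m}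

/-- The bipartite divisor graph of a set `X` of integers, on `ℕ ⊕ ℕ`
(left: primes, right: elements of `X`). -/
def bdg (X : Set ℕ) : SimpleGraph (ℕ ⊕ ℕ) where
  Adj v w :=
    (∃ p m, v = Sum.inl p ∧ w = Sum.inr m ∧ p.Prime ∧ m ∈ X ∧ p ∣ m) ∨
    (∃ p m, w = Sum.inl p ∧ v = Sum.inr m ∧ p.Prime ∧ m ∈ X ∧ p ∣ m)
  symm := ⟨fun v w h => h.symm⟩
  loopless := ⟨by rintro v (⟨p, m, h1, h2, _⟩ | ⟨p, m, h1, h2, _⟩) <;> subst h1 <;> simp_all⟩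

/-- The vertex set of the bipartite divisor graph. -/
def bdgVerts (X : Set ℕ) : Set (ℕ ⊕ ℕ) :=
  {v | Sum.elim (· ∈ rhoSet X) (· ∈ X) v}

/-- The bipartite divisor graph induced on its genuine vertex set. -/
def bdgGraph (X : Set ℕ) : SimpleGraph (bdgVerts X) :=
  (bdg X).induce (bdgVerts X)

/-- The bipartite divisor graph `B(G)` of the character degrees of `G`. -/
def BG (G : Type) [Group G] : SimpleGraph (bdgVerts (cdSet G \ {1})) :=
  bdgGraph (cdSet G \ {1})

/-- `Is a cycle of length n`. -/
def IsCycleOfLen {V : Type*} (Γ : SimpleGraph V) (n : ℕ) : Prop :=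
  Nonempty (Γ ≃g SimpleGraph.cycleGraph n)

/-- `Is a path of length n` (a path with `n` edges has `n+1` vertices). -/
def IsPathOfLen {V : Type*} (Γ : SimpleGraph V) (n : ℕ) : Prop :=
  Nonempty (Γ ≃g SimpleGraph.pathGraph (n + 1))

/-- The prime graph `Δ(X)`. -/
def deltaG (X : Set ℕ) : SimpleGraph (rhoSet X) :=
  SimpleGraph.induce (rhoSet X)
    { Adj := fun p q => p ≠ q ∧ p.Prime ∧ q.Prime ∧ ∃ m ∈ X, p ∣ m ∧ q ∣ m
      symm := ⟨fun p q h => ⟨h.1.symm, h.2.2.1, h.2.1, by tauto⟩⟩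
      loopless := ⟨fun p h => h.1 rfl⟩ }

/-- The common divisor graph `Γ(X)`. -/
def gammaG (X : Set ℕ) : SimpleGraph X :=
  SimpleGraph.induce X
    { Adj := fun m n => m ≠ n ∧ m ∈ X ∧ n ∈ X ∧ Nat.gcd m n ≠ 1
      symm := ⟨fun m n h => ⟨h.1.symm, h.2.2.1, h.2.1, by rw [Nat.gcd_comm]; exact h.2.2.2⟩⟩
      loopless := ⟨fun m h => h.1 rfl⟩ }

/-!
A 4-cycle is bipartite with parts of size two, and `B(X)` is bipartite with parts `ρ(X)` and
`X`; walking once around the cycle from a prime `p` therefore visits `p, m, q, n` with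
`p ≠ q` primes, `m ≠ n` in `X`, and `p, q ∣ m, n`. Since these four are all the vertices,
`X = {m, n}`, and every prime factor of `m` or `n`, being a vertex, is `p` or `q`.
-/

variable {X : Set ℕ}

@[simp]
lemma bdg_adj_inl_inr {p m : ℕ} :
    (bdg X).Adj (.inl p) (.inr m) ↔ p.Prime ∧ m ∈ X ∧ p ∣ m := by
  simp [bdg]

@[simp]
lemma bdg_adj_inr_inl {p m : ℕ} :
    (bdg X).Adj (.inr m) (.inl p) ↔ p.Prime ∧ m ∈ X ∧ p ∣ m := by
  simp [bdg]

@[simp]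
lemma bdg_not_adj_inl_inl {p q : ℕ} : ¬ (bdg X).Adj (.inl p) (.inl q) := by
  simp [bdg]

@[simp]
lemma bdg_not_adj_inr_inr {m n : ℕ} : ¬ (bdg X).Adj (.inr m) (.inr n) := by
  simp [bdg]

lemma exists_bdg_square_of_inl {p : ℕ} {b c d : ℕ ⊕ ℕ} (hab : (bdg X).Adj (.inl p) b)
    (hbc : (bdg X).Adj b c) (hcd : (bdg X).Adj c d) (hda : (bdg X).Adj d (.inl p)) :
    ∃ m q n, b = .inr m ∧ c = .inl q ∧ d = .inr n ∧ p.Prime ∧ q.Prime ∧ m ∈ X ∧ n ∈ X ∧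
      p ∣ m ∧ q ∣ m ∧ p ∣ n ∧ q ∣ n := by
  rcases b with _ | m <;> rcases c with q | _ <;> rcases d with _ | n <;>
    simp only [bdg_adj_inl_inr, bdg_adj_inr_inl, bdg_not_adj_inl_inl,
      bdg_not_adj_inr_inr] at hab hbc hcd hda
  exact ⟨m, q, n, rfl, rfl, rfl, hab.1, hbc.1, hab.2.1, hcd.2.1, hab.2.2, hbc.2.2, hda.2.2,
    hcd.2.2⟩

lemma exists_range_eq_of_bdg_adj_succ {v : Fin 4 → ℕ ⊕ ℕ} (hinj : v.Injective)
    (hadj : ∀ i, (bdg X).Adj (v i) (v (i + 1))) :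
    ∃ p q m n, p ≠ q ∧ m ≠ n ∧ p.Prime ∧ q.Prime ∧ m ∈ X ∧ n ∈ X ∧
      p ∣ m ∧ q ∣ m ∧ p ∣ n ∧ q ∣ n ∧ Set.range v = {.inl p, .inr m, .inl q, .inr n} := by
  wlog h0 : ∃ p, v 0 = .inl p generalizing v
  · -- otherwise `v 0` is an element of `X`, so `v 1` is a prime: start the walk there
    have h1 : ∃ p, v 1 = .inl p := by
      have := hadj 0
      rcases h : v 0 with p | m <;> rcases h' : v 1 with q | n <;> simp_all
    obtain ⟨p, q, m, n, hrest⟩ :=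
      this (hinj.comp (add_left_injective 1)) (fun i => hadj (i + 1)) h1
    refine ⟨p, q, m, n, ?_⟩
    rwa [← (Equiv.addRight (1 : Fin 4)).surjective.range_comp v]
  obtain ⟨p, h0⟩ := h0
  have h01 : (bdg X).Adj (.inl p) (v 1) := h0 ▸ hadj 0
  have h12 : (bdg X).Adj (v 1) (v 2) := hadj 1
  have h23 : (bdg X).Adj (v 2) (v 3) := hadj 2
  have h30 : (bdg X).Adj (v 3) (.inl p) := h0 ▸ hadj 3
  obtain ⟨m, q, n, h1, h2, h3, hp, hq, hm, hn, hpm, hqm, hpn, hqn⟩ :=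
    exists_bdg_square_of_inl h01 h12 h23 h30
  have hne : ∀ {i j : Fin 4}, i ≠ j → v i ≠ v j := fun hij e => hij (hinj e)
  refine ⟨p, q, m, n, ?_, ?_, hp, hq, hm, hn, hpm, hqm, hpn, hqn, ?_⟩
  · rintro rfl
    exact hne (by decide : (0 : Fin 4) ≠ 2) (h0.trans h2.symm)
  · rintro rfl
    exact hne (by decide : (1 : Fin 4) ≠ 3) (h1.trans h3.symm)
  · ext w
    constructor
    · rintro ⟨i, rfl⟩
      fin_cases i <;> simp [h0, h1, h2, h3]
    · rintro (rfl | rfl | rfl | rfl)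
      exacts [⟨0, h0⟩, ⟨1, h1⟩, ⟨2, h2⟩, ⟨3, h3⟩]

lemma exists_bdgVerts_subset_of_isCycleOfLen_four (h : IsCycleOfLen (bdgGraph X) 4) :
    ∃ p q m n, p ≠ q ∧ m ≠ n ∧ p.Prime ∧ q.Prime ∧ m ∈ X ∧ n ∈ X ∧
      p ∣ m ∧ q ∣ m ∧ p ∣ n ∧ q ∣ n ∧ bdgVerts X ⊆ {.inl p, .inr m, .inl q, .inr n} := by
  obtain ⟨e⟩ := h
  have hadj (i : Fin 4) : (bdg X).Adj (e.symm i).1 (e.symm (i + 1)).1 :=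
    e.symm.map_adj_iff.2 <| by fin_cases i <;> decide
  obtain ⟨p, q, m, n, hpq, hmn, hp, hq, hm, hn, hpm, hqm, hpn, hqn, hrange⟩ :=
    exists_range_eq_of_bdg_adj_succ (Subtype.val_injective.comp e.symm.injective) hadj
  refine ⟨p, q, m, n, hpq, hmn, hp, hq, hm, hn, hpm, hqm, hpn, hqn, fun w hw => ?_⟩
  rw [← hrange]
  exact ⟨e ⟨w, hw⟩, by simp⟩

lemma eq_pair_of_bdgVerts_subset {p q m n : ℕ}
    (hverts : bdgVerts X ⊆ {.inl p, .inr m, .inl q, .inr n}) (hm : m ∈ X) (hn : n ∈ X) :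
    X = {m, n} := by
  refine Set.Subset.antisymm (fun k hk => ?_) (Set.insert_subset hm (by simpa using hn))
  simpa using hverts (show .inr k ∈ bdgVerts X from hk)

lemma primeFactors_eq_pair_of_bdgVerts_subset {p q m n k : ℕ}
    (hverts : bdgVerts X ⊆ {.inl p, .inr m, .inl q, .inr n}) (hk : k ∈ X) (hk0 : k ≠ 0)
    (hp : p.Prime) (hq : q.Prime) (hpk : p ∣ k) (hqk : q ∣ k) :
    k.primeFactors = {p, q} := by
  ext r
  simp only [Nat.mem_primeFactors, Finset.mem_insert, Finset.mem_singleton]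
  constructor
  · rintro ⟨hr, hrk, -⟩
    simpa using hverts (show .inl r ∈ bdgVerts X from ⟨hr, k, hk, hrk⟩)
  · rintro (rfl | rfl)
    exacts [⟨hp, hpk, hk0⟩, ⟨hq, hqk, hk0⟩]

theorem stmt3_general (X : Set ℕ) (hgt : ∀ x ∈ X, 1 < x)
    (h : IsCycleOfLen (bdgGraph X) 4) :
    ∃ m n p q : ℕ, m ≠ n ∧ p ≠ q ∧ p.Prime ∧ q.Prime ∧ X = {m, n} ∧
      m.primeFactors = {p, q} ∧ n.primeFactors = {p, q} := by
  obtain ⟨p, q, m, n, hpq, hmn, hp, hq, hm, hn, hpm, hqm, hpn, hqn, hverts⟩ :=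
    exists_bdgVerts_subset_of_isCycleOfLen_four h
  have hne_zero : ∀ k ∈ X, k ≠ 0 := fun k hk => (zero_lt_one.trans (hgt k hk)).ne'
  exact ⟨m, n, p, q, hmn, hpq, hp, hq, eq_pair_of_bdgVerts_subset hverts hm hn,
    primeFactors_eq_pair_of_bdgVerts_subset hverts hm (hne_zero m hm) hp hq hpm hqm,
    primeFactors_eq_pair_of_bdgVerts_subset hverts hn (hne_zero n hn) hp hq hpn hqn⟩

/-- If `B(X)` is a 4-cycle then `X = {m, n}` where `m, n` have the same two prime divisors. -/
theorem stmt3 (X : Set ℕ) (hfin : X.Finite) (hgt : ∀ x ∈ X, 1 < x)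
    (h : IsCycleOfLen (bdgGraph X) 4) :
    ∃ m n p q : ℕ, m ≠ n ∧ p ≠ q ∧ p.Prime ∧ q.Prime ∧ X = {m, n} ∧
      m.primeFactors = {p, q} ∧ n.primeFactors = {p, q} :=
  stmt3_general X hgt h
end

section
/- Let X ⊆ ℕ be a finite nonempty set of integers greater than 1 and let B(X), Δ(X), Γ(X) be its bipartite divisor graph, prime graph, and common divisor graph. Then the number of connected components of B(X), Δ(X), and Γ(X) coincide. -/
open CategoryTheory

/-!
Components of `B(X)` correspond to components of `Δ(X)` by sending a prime `p` to its vertex and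
a number `m` to any of its prime divisors (one exists since `m ≠ 1`); they correspond to components
of `Γ(X)` by sending `m` to its vertex and a prime to any multiple of it in `X`. In each case the
two maps carry edges into connected sets and are mutually inverse up to reachability.
-/

namespace SimpleGraph

variable {V W : Type*} {G : SimpleGraph V} {H : SimpleGraph W}

protected theorem Reachable.map_of_adj {f : V → W}
    (hf : ∀ ⦃u v⦄, G.Adj u v → H.Reachable (f u) (f v)) {u v : V} (h : G.Reachable u v) :
    H.Reachable (f u) (f v) := by
  rw [reachable_iff_reflTransGen] at h ⊢
  exact Relation.ReflTransGen.lift' f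
    (fun a b hab => (reachable_iff_reflTransGen _ _).1 (hf hab)) _ _ h

def ConnectedComponent.equivOfReachable (f : V → W) (g : W → V)
    (hf : ∀ ⦃u v⦄, G.Adj u v → H.Reachable (f u) (f v))
    (hg : ∀ ⦃a b⦄, H.Adj a b → G.Reachable (g a) (g b))
    (hgf : ∀ v, G.Reachable (g (f v)) v) (hfg : ∀ a, H.Reachable (f (g a)) a) :
    G.ConnectedComponent ≃ H.ConnectedComponent where
  toFun := ConnectedComponent.lift (fun v => H.connectedComponentMk (f v))
    fun _ _ p _ => ConnectedComponent.sound (p.reachable.map_of_adj hf)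
  invFun := ConnectedComponent.lift (fun a => G.connectedComponentMk (g a))
    fun _ _ p _ => ConnectedComponent.sound (p.reachable.map_of_adj hg)
  left_inv := ConnectedComponent.ind fun v => ConnectedComponent.sound (hgf v)
  right_inv := ConnectedComponent.ind fun a => ConnectedComponent.sound (hfg a)

end SimpleGraph

open SimpleGraph

section DivisorGraphs

variable {X : Set ℕ}

def bdgPrime (p : rhoSet X) : bdgVerts X := ⟨Sum.inl p, p.2⟩

def bdgElem (m : X) : bdgVerts X := ⟨Sum.inr m, m.2⟩

theorem bdgGraph_adj_prime_elem {p : rhoSet X} {m : X} (h : p.1 ∣ m) :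
    (bdgGraph X).Adj (bdgPrime p) (bdgElem m) :=
  Or.inl ⟨p, m, rfl, rfl, p.2.1, m.2, h⟩

theorem bdgGraph_adj_imp {r : bdgVerts X → bdgVerts X → Prop}
    (hr : ∀ ⦃u v⦄, r u v → r v u)
    (h : ∀ (p : rhoSet X) (m : X), p.1 ∣ m → r (bdgPrime p) (bdgElem m))
    ⦃u v : bdgVerts X⦄ (huv : (bdgGraph X).Adj u v) : r u v := by
  obtain ⟨u, hu⟩ := u
  obtain ⟨v, hv⟩ := v
  rcases huv with ⟨p, m, rfl, rfl, -, -, hpm⟩ | ⟨p, m, rfl, rfl, -, -, hpm⟩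
  · exact h ⟨p, hu⟩ ⟨m, hv⟩ hpm
  · exact hr (h ⟨p, hv⟩ ⟨m, hu⟩ hpm)

theorem deltaG_reachable_of_dvd {p q : rhoSet X} {m : ℕ} (hm : m ∈ X) (hp : p.1 ∣ m)
    (hq : q.1 ∣ m) : (deltaG X).Reachable p q := by
  by_cases hpq : p = q
  · exact hpq ▸ Reachable.refl p
  · exact Adj.reachable ⟨Subtype.coe_injective.ne hpq, p.2.1, q.2.1, m, hm, hp, hq⟩

theorem gammaG_reachable_of_dvd {m n : X} {p : ℕ} (hp : p.Prime) (hm : p ∣ m) (hn : p ∣ n) :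
    (gammaG X).Reachable m n := by
  by_cases hmn : m = n
  · exact hmn ▸ Reachable.refl m
  · refine Adj.reachable ⟨Subtype.coe_injective.ne hmn, m.2, n.2, fun h => hp.ne_one ?_⟩
    exact Nat.eq_one_of_dvd_one (h ▸ Nat.dvd_gcd hm hn)

theorem bdgGraph_reachable_of_deltaG_adj {p q : rhoSet X} (h : (deltaG X).Adj p q) :
    (bdgGraph X).Reachable (bdgPrime p) (bdgPrime q) := by
  obtain ⟨-, -, -, m, hm, hpm, hqm⟩ := h
  exact (bdgGraph_adj_prime_elem (m := ⟨m, hm⟩) hpm).reachable.trans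
    (bdgGraph_adj_prime_elem (m := ⟨m, hm⟩) hqm).reachable.symm

theorem bdgGraph_reachable_of_gammaG_adj {m n : X} (h : (gammaG X).Adj m n) :
    (bdgGraph X).Reachable (bdgElem m) (bdgElem n) := by
  obtain ⟨-, -, -, hmn⟩ := h
  have hpm : (Nat.gcd m n).minFac ∣ m := (Nat.minFac_dvd _).trans (Nat.gcd_dvd_left _ _)
  have hpn : (Nat.gcd m n).minFac ∣ n := (Nat.minFac_dvd _).trans (Nat.gcd_dvd_right _ _)
  let p : rhoSet X := ⟨_, Nat.minFac_prime hmn, m, m.2, hpm⟩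
  exact (bdgGraph_adj_prime_elem (p := p) hpm).reachable.symm.trans
    (bdgGraph_adj_prime_elem (p := p) hpn).reachable

def bdgToPrime (h1 : 1 ∉ X) : bdgVerts X → rhoSet X
  | ⟨.inl p, hp⟩ => ⟨p, hp⟩
  | ⟨.inr m, (hm : m ∈ X)⟩ =>
    ⟨m.minFac, Nat.minFac_prime (ne_of_mem_of_not_mem hm h1), m, hm, m.minFac_dvd⟩

noncomputable def bdgToElem : bdgVerts X → X
  | ⟨.inl _, hp⟩ => ⟨hp.2.choose, hp.2.choose_spec.1⟩
  | ⟨.inr m, hm⟩ => ⟨m, hm⟩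

theorem bdgToElem_prime_dvd (p : rhoSet X) : p.1 ∣ bdgToElem (bdgPrime p) :=
  p.2.2.choose_spec.2

def bdgGraphComponentEquivDeltaG (h1 : 1 ∉ X) :
    (bdgGraph X).ConnectedComponent ≃ (deltaG X).ConnectedComponent := by
  refine ConnectedComponent.equivOfReachable (bdgToPrime h1) bdgPrime
    (bdgGraph_adj_imp (fun _ _ h => h.symm) fun _ m hpm => ?_)
    (fun _ _ => bdgGraph_reachable_of_deltaG_adj) (fun v => ?_) fun p => Reachable.refl p
  · exact deltaG_reachable_of_dvd m.2 hpm m.1.minFac_dvd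
  · obtain ⟨_ | m, hv⟩ := v
    · rfl
    · exact (bdgGraph_adj_prime_elem (m := ⟨m, hv⟩) (Nat.minFac_dvd m)).reachable

noncomputable def bdgGraphComponentEquivGammaG :
    (bdgGraph X).ConnectedComponent ≃ (gammaG X).ConnectedComponent := by
  refine ConnectedComponent.equivOfReachable bdgToElem bdgElem
    (bdgGraph_adj_imp (fun _ _ h => h.symm) fun p m hpm => ?_)
    (fun _ _ => bdgGraph_reachable_of_gammaG_adj) (fun v => ?_) fun m => Reachable.refl m
  · exact gammaG_reachable_of_dvd p.2.1 (bdgToElem_prime_dvd p) hpm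
  · obtain ⟨p | m, hv⟩ := v
    · exact (bdgGraph_adj_prime_elem (p := ⟨p, hv⟩) (bdgToElem_prime_dvd _)).reachable.symm
    · rfl

end DivisorGraphs

theorem stmt15_general (X : Set ℕ) (hgt : ∀ x ∈ X, 1 < x) :
    Nat.card ((bdgGraph X).ConnectedComponent) = Nat.card ((deltaG X).ConnectedComponent) ∧
    Nat.card ((deltaG X).ConnectedComponent) = Nat.card ((gammaG X).ConnectedComponent) := by
  have h1 : 1 ∉ X := fun h => (hgt 1 h).false
  have hΔ := Nat.card_congr (bdgGraphComponentEquivDeltaG h1)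
  exact ⟨hΔ, hΔ.symm.trans (Nat.card_congr bdgGraphComponentEquivGammaG)⟩

/-- The numbers of connected components of `B(X)`, `Δ(X)` and `Γ(X)` coincide. -/
theorem stmt15 (X : Set ℕ) (hfin : X.Finite) (hne : X.Nonempty) (hgt : ∀ x ∈ X, 1 < x) :
    Nat.card ((bdgGraph X).ConnectedComponent) = Nat.card ((deltaG X).ConnectedComponent) ∧
    Nat.card ((deltaG X).ConnectedComponent) = Nat.card ((gammaG X).ConnectedComponent) :=
  stmt15_general X hgt
end
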